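/- Let b_1,…,b_k be complex 2×2 matrices with Σ_{i=1}^k b_i* b_i = 1, let e ≥ 1, and let u_1,…,u_k be unitary complex e×e matrices. Set a_i := b_i ⊗ u_i (the Kronecker product), a complex (2e)×(2e) matrix. Then Σ_{i=1}^k a_i* a_i = 1, so (a_1,…,a_k) is a perfect measurement, and for every unit vector ψ ∈ ℂ², the matrix p := (ψψ*) ⊗ 1_e is a dark projection; explicitly, for every finite word w = (i_1,…,i_n) with letters in {1,…,k}, p A_w* A_w p = ‖b_{i_n}···b_{i_1} ψ‖² · p. -/
import Mathlib


open Matrix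
open scoped Kronecker

/-- For a finite word `w = (i₁,…,iₙ)` (as a list `[i₁,…,iₙ]`), the matrix
`A_w := a_{iₙ} ⋯ a_{i₁}`. -/
noncomputable def wordMatrix {I n : Type*} [Fintype n] [DecidableEq n]
    (a : I → Matrix n n ℂ) (w : List I) : Matrix n n ℂ :=
  (w.reverse.map a).prod

lemma kron_conjTranspose {m n : Type*} (A : Matrix m m ℂ) (B : Matrix n n ℂ) :
    (A ⊗ₖ B)ᴴ = Aᴴ ⊗ₖ Bᴴ := by
  ext ⟨i, j⟩ ⟨i', j'⟩
  simp [conjTranspose_apply, kroneckerMap_apply]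

lemma prod_kron {k : ℕ} {e : ℕ} (b : Fin k → Matrix (Fin 2) (Fin 2) ℂ)
    (u : Fin k → Matrix (Fin e) (Fin e) ℂ) (l : List (Fin k)) :
    (l.map fun i => b i ⊗ₖ u i).prod = (l.map b).prod ⊗ₖ (l.map u).prod := by
  induction l with
  | nil => simp [Matrix.one_kronecker_one]
  | cons a t ih => simp [ih, Matrix.mul_kronecker_mul]

lemma prod_unitary {e : ℕ} {k : ℕ} (u : Fin k → Matrix (Fin e) (Fin e) ℂ)
    (hu : ∀ i, u i ∈ Matrix.unitaryGroup (Fin e) ℂ) (l : List (Fin k)) :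
    ((l.map u).prod)ᴴ * (l.map u).prod = 1 := by
  induction l with
  | nil => simp
  | cons a t ih =>
    have h : (u a)ᴴ * u a = 1 := by
      simpa [Matrix.star_eq_conjTranspose] using (hu a).1
    simp only [List.map_cons, List.prod_cons, conjTranspose_mul]
    calc ((t.map u).prod)ᴴ * (u a)ᴴ * ((u a) * (t.map u).prod)
        = ((t.map u).prod)ᴴ * ((u a)ᴴ * (u a)) * (t.map u).prod := by
          simp [Matrix.mul_assoc]
      _ = 1 := by rw [h, Matrix.mul_one, ih]

lemma pMp {n : Type*} [Fintype n] [DecidableEq n] (ψ : n → ℂ) (M : Matrix n n ℂ) :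
    Matrix.vecMulVec ψ (star ψ) * M * Matrix.vecMulVec ψ (star ψ) =
      (star ψ ⬝ᵥ M.mulVec ψ) • Matrix.vecMulVec ψ (star ψ) := by
  ext i j
  simp only [Matrix.mul_apply, Matrix.vecMulVec_apply, Matrix.smul_apply, dotProduct,
    Matrix.mulVec, smul_eq_mul, Pi.star_apply, Finset.sum_mul, Finset.mul_sum]
  rw [Finset.sum_comm]
  refine Finset.sum_congr rfl fun x _ => Finset.sum_congr rfl fun y _ => by ring

lemma star_dot_self {n : Type*} [Fintype n] (v : n → ℂ) :
    star v ⬝ᵥ v = ((∑ r, ‖v r‖ ^ 2 : ℝ) : ℂ) := by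
  push_cast
  simp only [dotProduct, Pi.star_apply]
  refine Finset.sum_congr rfl fun r _ => ?_
  have hs : star (v r) = (starRingEnd ℂ) (v r) := rfl
  rw [hs, mul_comm, Complex.mul_conj']

lemma dot_norm {n : Type*} [Fintype n] (B : Matrix n n ℂ) (ψ : n → ℂ) :
    star ψ ⬝ᵥ (Bᴴ * B).mulVec ψ = ((∑ r, ‖B.mulVec ψ r‖ ^ 2 : ℝ) : ℂ) := by
  rw [← Matrix.mulVec_mulVec, Matrix.dotProduct_mulVec, ← Matrix.star_mulVec,
    star_dot_self]

lemma sum_kron_one {k e : ℕ} (M : Fin k → Matrix (Fin 2) (Fin 2) ℂ) :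
    ∑ i, (M i ⊗ₖ (1 : Matrix (Fin e) (Fin e) ℂ)) =
      (∑ i, M i) ⊗ₖ (1 : Matrix (Fin e) (Fin e) ℂ) := by
  ext ⟨a, c⟩ ⟨a', c'⟩
  simp [kroneckerMap_apply, Matrix.sum_apply, Finset.sum_mul]

/-- Example 2 of dark subspaces: with `a_i := b_i ⊗ u_i` (`Σ b_i* b_i = 1`, `u_i`
unitary), the tuple `(a_i)` is a perfect measurement and for every unit vector
`ψ ∈ ℂ²` the projection `p = ψψ* ⊗ 1` is dark, with
`p A_w* A_w p = ‖b_{iₙ}⋯b_{i₁} ψ‖² p`. -/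
theorem tensor_dark_subspaces_example {k e : ℕ} (he : 1 ≤ e)
    (b : Fin k → Matrix (Fin 2) (Fin 2) ℂ)
    (hb : ∑ i, (b i)ᴴ * b i = 1)
    (u : Fin k → Matrix (Fin e) (Fin e) ℂ)
    (hu : ∀ i, u i ∈ Matrix.unitaryGroup (Fin e) ℂ) :
    (∑ i : Fin k, (b i ⊗ₖ u i)ᴴ * (b i ⊗ₖ u i) =
      (1 : Matrix (Fin 2 × Fin e) (Fin 2 × Fin e) ℂ)) ∧
    ∀ ψ : Fin 2 → ℂ, (∑ i, ‖ψ i‖ ^ 2 = 1) →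
      (Matrix.vecMulVec ψ (star ψ) ⊗ₖ (1 : Matrix (Fin e) (Fin e) ℂ)).IsHermitian ∧
      (Matrix.vecMulVec ψ (star ψ) ⊗ₖ (1 : Matrix (Fin e) (Fin e) ℂ)) *
          (Matrix.vecMulVec ψ (star ψ) ⊗ₖ (1 : Matrix (Fin e) (Fin e) ℂ)) =
        Matrix.vecMulVec ψ (star ψ) ⊗ₖ (1 : Matrix (Fin e) (Fin e) ℂ) ∧
      ∀ w : List (Fin k),
        (Matrix.vecMulVec ψ (star ψ) ⊗ₖ (1 : Matrix (Fin e) (Fin e) ℂ)) *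
            (wordMatrix (fun i => b i ⊗ₖ u i) w)ᴴ *
            wordMatrix (fun i => b i ⊗ₖ u i) w *
            (Matrix.vecMulVec ψ (star ψ) ⊗ₖ (1 : Matrix (Fin e) (Fin e) ℂ)) =
          ((∑ r : Fin 2, ‖(wordMatrix b w).mulVec ψ r‖ ^ 2 : ℝ) : ℂ) •
            (Matrix.vecMulVec ψ (star ψ) ⊗ₖ (1 : Matrix (Fin e) (Fin e) ℂ)) := by
  have huH : ∀ i, (u i)ᴴ * u i = 1 := fun i => by
    simpa [Matrix.star_eq_conjTranspose] using (hu i).1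
  constructor
  · have h1 : ∀ i, (b i ⊗ₖ u i)ᴴ * (b i ⊗ₖ u i) =
        ((b i)ᴴ * b i) ⊗ₖ (1 : Matrix (Fin e) (Fin e) ℂ) := by
      intro i
      rw [kron_conjTranspose, ← Matrix.mul_kronecker_mul, huH]
    simp only [h1]
    rw [sum_kron_one, hb, Matrix.one_kronecker_one]
  · intro ψ hψ
    have hvm : (Matrix.vecMulVec ψ (star ψ)).IsHermitian := by
      ext i j
      simp [conjTranspose_apply, Matrix.vecMulVec_apply, mul_comm]
    have hdot : star ψ ⬝ᵥ ψ = 1 := by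
      rw [star_dot_self, hψ]; norm_num
    have hproj : Matrix.vecMulVec ψ (star ψ) * Matrix.vecMulVec ψ (star ψ) =
        Matrix.vecMulVec ψ (star ψ) := by
      have h := pMp ψ (1 : Matrix (Fin 2) (Fin 2) ℂ)
      simp only [Matrix.mul_one, Matrix.one_mulVec] at h
      rw [h, hdot, one_smul]
    refine ⟨?_, ?_, ?_⟩
    · rw [Matrix.IsHermitian, kron_conjTranspose, hvm, Matrix.conjTranspose_one]
    · rw [← Matrix.mul_kronecker_mul, hproj, Matrix.one_mul]
    · intro w
      have hA : wordMatrix (fun i => b i ⊗ₖ u i) w =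
          wordMatrix b w ⊗ₖ wordMatrix u w := by
        simp only [wordMatrix]
        exact prod_kron b u w.reverse
      have hU : (wordMatrix u w)ᴴ * wordMatrix u w = 1 :=
        prod_unitary u hu w.reverse
      rw [hA, kron_conjTranspose, ← Matrix.mul_kronecker_mul,
        ← Matrix.mul_kronecker_mul, ← Matrix.mul_kronecker_mul]
      have hright : (1 : Matrix (Fin e) (Fin e) ℂ) * (wordMatrix u w)ᴴ *
          wordMatrix u w * 1 = 1 := by
        rw [Matrix.one_mul, Matrix.mul_one, hU]
      have hleft : Matrix.vecMulVec ψ (star ψ) * (wordMatrix b w)ᴴ *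
          wordMatrix b w * Matrix.vecMulVec ψ (star ψ) =
          ((∑ r : Fin 2, ‖(wordMatrix b w).mulVec ψ r‖ ^ 2 : ℝ) : ℂ) •
            Matrix.vecMulVec ψ (star ψ) := by
        rw [Matrix.mul_assoc (Matrix.vecMulVec ψ (star ψ)), pMp, dot_norm]
      rw [hright, hleft, Matrix.smul_kronecker]
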